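/- Let ε > 0 and let G be a simple graph on n vertices with m edges. If G is ε-far from being bipartite, then the number of triangles of G satisfies t(G) ≥ (n/6)·(m + ε − n²/4). -/

import Mathlib

open Classical in
/-- Adjacency matrix of a simple graph, over `ℝ`. -/
noncomputable def adjMat {V : Type*} [Fintype V] (G : SimpleGraph V) : Matrix V V ℝ :=
  Matrix.of fun i j => if G.Adj i j then 1 else 0

/-- Spectral radius (largest eigenvalue) of a finite simple graph: the supremum of the
real spectrum of its adjacency matrix. -/
noncomputable def specRad {V : Type*} [Fintype V] [DecidableEq V]
    (G : SimpleGraph V) : ℝ :=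
  sSup (spectrum ℝ (adjMat G))

/-- Number of edges of a graph. -/
noncomputable def edgeCount {V : Type*} (G : SimpleGraph V) : ℕ := G.edgeSet.ncard

/-- Number of triangles of a graph. -/
noncomputable def triangleCount {V : Type*} (G : SimpleGraph V) : ℕ :=
  {t : Finset V | G.IsNClique 3 t}.ncard

/-- Triangle covering number: minimum size of a vertex set meeting every triangle. -/
noncomputable def triangleCoverNumber {V : Type*} [Fintype V] [DecidableEq V]
    (G : SimpleGraph V) : ℕ :=
  sInf {k | ∃ s : Finset V, s.card = k ∧ ∀ t : Finset V, G.IsNClique 3 t → ∃ v ∈ s, v ∈ t}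

/-- Number of bowties: unordered pairs of triangles sharing exactly one vertex. -/
noncomputable def bowtieCount {V : Type*} [DecidableEq V] (G : SimpleGraph V) : ℕ :=
  {p : Finset (Finset V) | p.card = 2 ∧ (∀ t ∈ p, G.IsNClique 3 t) ∧
    ∀ t₁ ∈ p, ∀ t₂ ∈ p, t₁ ≠ t₂ → (t₁ ∩ t₂).card = 1}.ncard

/-- Complete bipartite graph on `Fin n` with parts `[0, s)` and `[s, n)`. -/
def biGraph (n s : ℕ) : SimpleGraph (Fin n) :=
  SimpleGraph.fromRel (fun i j => (i : ℕ) < s ∧ s ≤ (j : ℕ))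

/-- `K_{s,t}^{+2}`: complete bipartite with two disjoint extra edges `{0,1}`, `{2,3}`
inside the part `[0, s)`. -/
def biGraphPlus2 (n s : ℕ) : SimpleGraph (Fin n) :=
  SimpleGraph.fromRel (fun i j => ((i : ℕ) < s ∧ s ≤ (j : ℕ)) ∨
    ((i : ℕ) = 0 ∧ (j : ℕ) = 1) ∨ ((i : ℕ) = 2 ∧ (j : ℕ) = 3))

/-- `K_{s,t}^{+}`: complete bipartite with one extra edge `{0,1}` inside the part `[0, s)`. -/
def biGraphPlus1 (n s : ℕ) : SimpleGraph (Fin n) :=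
  SimpleGraph.fromRel (fun i j => ((i : ℕ) < s ∧ s ≤ (j : ℕ)) ∨ ((i : ℕ) = 0 ∧ (j : ℕ) = 1))

/-- `K_{s,t}^{++}`: complete bipartite with one extra edge in each part. -/
def biGraphPlusPlus (n s : ℕ) : SimpleGraph (Fin n) :=
  SimpleGraph.fromRel (fun i j => ((i : ℕ) < s ∧ s ≤ (j : ℕ)) ∨
    ((i : ℕ) = 0 ∧ (j : ℕ) = 1) ∨ ((i : ℕ) = s ∧ (j : ℕ) = s + 1))

/-- The friendship graph `F_k`: `k` triangles meeting in the common vertex `0`. -/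
def friendship (k : ℕ) : SimpleGraph (Fin (2 * k + 1)) :=
  SimpleGraph.fromRel (fun a b => ((a : ℕ) = 0 ∧ (b : ℕ) ≠ 0) ∨
    ((a : ℕ) % 2 = 1 ∧ (b : ℕ) = (a : ℕ) + 1))

/-- `G` contains a copy of `H` (a subgraph isomorphic to `H`). -/
def ContainsCopy {α β : Type*} (H : SimpleGraph α) (G : SimpleGraph β) : Prop :=
  ∃ f : α → β, Function.Injective f ∧ ∀ a b, H.Adj a b → G.Adj (f a) (f b)

/-- Number of edges of `G` with both endpoints in `S`. -/
noncomputable def eIn {V : Type*} (G : SimpleGraph V) (S : Finset V) : ℕ :=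
  {e ∈ G.edgeSet | ∀ v ∈ e, v ∈ S}.ncard

/-- Number of edges of `G` with one endpoint in `S` and the other in `T`. -/
noncomputable def eCross {V : Type*} (G : SimpleGraph V) (S T : Finset V) : ℕ :=
  {e ∈ G.edgeSet | ∃ u ∈ S, ∃ v ∈ T, e = s(u, v)}.ncard

/-- `G` is `ε`-far from being bipartite: every spanning subgraph obtained by removing
fewer than `ε` edges is non-bipartite. -/
def FarFromBipartite {V : Type*} (G : SimpleGraph V) (ε : ℝ) : Prop :=
  ∀ G' : SimpleGraph V, G' ≤ G → (edgeCount G : ℝ) - ε < (edgeCount G' : ℝ) →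
    ¬ G'.Colorable 2

/-! For a vertex `v`, the edges of `G` between `N(v)` and its complement form a bipartite
subgraph, so there are at most `m - ε` of them. Since every other edge at a neighbour of `v`
closes a triangle through `v`, `∑_{a ∈ N(v)} deg a = e(N(v), N(v)ᶜ) + 2 t(v)`; summing over `v`
gives `∑ deg² ≤ n (m - ε) + 6 t`. With Cauchy–Schwarz, `4 m² / n ≤ ∑ deg²`, this yields
`6 t ≥ 4 m² / n - n (m - ε) ≥ n (m + ε - n² / 4)`. -/

open Finset

namespace SimpleGraph

variable {V : Type*} [Fintype V] (G : SimpleGraph V) [DecidableRel G.Adj]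

lemma edgeCount_eq_card_edgeFinset : edgeCount G = #G.edgeFinset := by
  rw [edgeCount, ← coe_edgeFinset, Set.ncard_coe_finset]

lemma sum_sum_degree_neighborFinset :
    ∑ v, ∑ a ∈ G.neighborFinset v, G.degree a = ∑ v, G.degree v ^ 2 := by
  rw [sum_comm' (t' := univ) (s' := fun a => G.neighborFinset a) (by simp [adj_comm])]
  simp [sq]

variable [DecidableEq V]

lemma triangleCount_eq_card_cliqueFinset : triangleCount G = #(G.cliqueFinset 3) := by
  change (G.cliqueSet 3).ncard = _
  rw [← coe_cliqueFinset, Set.ncard_coe_finset]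

lemma degree_eq_between_add_card_inter {s : Finset V} {v : V} (hv : v ∈ s) :
    G.degree v = (G.between s sᶜ).degree v + #(G.neighborFinset v ∩ s) := by
  have hout : {b ∈ G.neighborFinset v | b ∉ s} = (G.between s sᶜ).neighborFinset v := by
    ext b; simp [between_adj, hv]
  rw [← card_neighborFinset_eq_degree, ← card_neighborFinset_eq_degree, ← hout,
    ← filter_mem_eq_inter, add_comm, card_filter_add_card_filter_not]

lemma sum_degree_neighborFinset (v : V) :
    ∑ a ∈ G.neighborFinset v, G.degree a =
      #(G.between (G.neighborFinset v) (G.neighborFinset v)ᶜ).edgeFinset +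
        ∑ a ∈ G.neighborFinset v, #(G.neighborFinset a ∩ G.neighborFinset v) := by
  have hcut : (G.between (G.neighborFinset v) (G.neighborFinset v)ᶜ).IsBipartiteWith
      (G.neighborFinset v) ↑(G.neighborFinset v)ᶜ := by
    simpa using between_isBipartiteWith disjoint_compl_right
  rw [← isBipartiteWith_sum_degrees_eq_card_edges hcut, ← sum_add_distrib]
  exact sum_congr rfl fun a ha => G.degree_eq_between_add_card_inter ha

def orderedTriangleFinset : Finset (V × V × V) :=
  {p | G.Adj p.1 p.2.1 ∧ G.Adj p.1 p.2.2 ∧ G.Adj p.2.1 p.2.2}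

lemma sum_sum_card_neighborFinset_inter :
    ∑ v, ∑ a ∈ G.neighborFinset v, #(G.neighborFinset a ∩ G.neighborFinset v) =
      #G.orderedTriangleFinset := by
  rw [orderedTriangleFinset, card_filter, Fintype.sum_prod_type]
  refine sum_congr rfl fun v _ => ?_
  rw [Fintype.sum_prod_type, neighborFinset_eq_filter, sum_filter]
  refine sum_congr rfl fun a _ => ?_
  split_ifs with ha
  · rw [← card_filter]
    congr 1
    ext b
    simp [ha, and_comm]
  · simp [ha]

lemma card_orderedTriangleFinset_le : #G.orderedTriangleFinset ≤ 6 * #(G.cliqueFinset 3) := by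
  refine card_le_mul_card_image_of_maps_to (f := fun p => {p.1, p.2.1, p.2.2})
    (fun p hp => ?_) 6 fun t ht => ?_
  · simpa [orderedTriangleFinset, is3Clique_triple_iff] using hp
  have ht3 : #t = 3 := (mem_cliqueFinset_iff.1 ht).2
  -- a triangle is recovered from its first two vertices
  calc _ ≤ #t.offDiag := card_le_card_of_injOn (fun p => (p.1, p.2.1)) ?_ ?_
    _ = 6 := by simp [offDiag_card, ht3]
  · rintro ⟨a, b, c⟩ hp
    simp only [orderedTriangleFinset, coe_filter, mem_filter, mem_univ, true_and] at hp
    obtain ⟨⟨hab, -, -⟩, rfl⟩ := hp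
    simp [hab.ne]
  · rintro ⟨a, b, c⟩ hp ⟨a', b', c'⟩ hp' h
    simp only [orderedTriangleFinset, coe_filter, mem_filter, mem_univ, true_and] at hp hp'
    obtain ⟨rfl, rfl⟩ := Prod.mk.inj h
    obtain ⟨⟨-, hac, hbc⟩, rfl⟩ := hp
    obtain ⟨⟨-, hac', hbc'⟩, ht⟩ := hp'
    have hc' : c' ∈ ({a, b, c} : Finset V) := ht ▸ by simp
    simp only [mem_insert, mem_singleton] at hc'
    rcases hc' with rfl | rfl | rfl
    · exact (hac'.ne rfl).elim
    · exact (hbc'.ne rfl).elim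
    · rfl

end SimpleGraph

open SimpleGraph

lemma FarFromBipartite.edgeCount_le {V : Type*} {G H : SimpleGraph V} {ε : ℝ}
    (hG : FarFromBipartite G ε) (hHG : H ≤ G) (hH : H.IsBipartite) :
    (edgeCount H : ℝ) ≤ edgeCount G - ε :=
  not_lt.1 fun h => hG H hHG h hH

theorem FarFromBipartite.sum_degree_sq_le {V : Type*} [Fintype V] [DecidableEq V]
    {G : SimpleGraph V} [DecidableRel G.Adj] {ε : ℝ} (hG : FarFromBipartite G ε) :
    ∑ v, (G.degree v : ℝ) ^ 2 ≤
      Fintype.card V * (#G.edgeFinset - ε) + 6 * #(G.cliqueFinset 3) := by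
  have hcut (v : V) :
      (#(G.between (G.neighborFinset v) (G.neighborFinset v)ᶜ).edgeFinset : ℝ) ≤
        #G.edgeFinset - ε := by
    simpa only [edgeCount_eq_card_edgeFinset] using
      hG.edgeCount_le (H := G.between (G.neighborFinset v) (G.neighborFinset v)ᶜ) between_le
        (between_isBipartite disjoint_compl_right)
  have htri : (∑ v, ∑ a ∈ G.neighborFinset v,
      #(G.neighborFinset a ∩ G.neighborFinset v) : ℝ) ≤ 6 * #(G.cliqueFinset 3) := by
    exact_mod_cast G.sum_sum_card_neighborFinset_inter ▸ G.card_orderedTriangleFinset_le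
  calc ∑ v, (G.degree v : ℝ) ^ 2
      = ∑ v, ((#(G.between (G.neighborFinset v) (G.neighborFinset v)ᶜ).edgeFinset : ℝ) +
          ∑ a ∈ G.neighborFinset v, #(G.neighborFinset a ∩ G.neighborFinset v)) := by
        have h := G.sum_sum_degree_neighborFinset
        simp_rw [sum_degree_neighborFinset] at h
        exact_mod_cast h.symm
    _ ≤ ∑ _v : V, ((#G.edgeFinset : ℝ) - ε) + 6 * #(G.cliqueFinset 3) := by
        rw [sum_add_distrib]
        push_cast
        exact add_le_add (sum_le_sum fun v _ => hcut v) htri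
    _ = _ := by rw [sum_const, card_univ, nsmul_eq_mul]

theorem stmt_11_general (n : ℕ) (ε : ℝ) (G : SimpleGraph (Fin n))
    (hfar : FarFromBipartite G ε) :
    (n : ℝ) / 6 * ((edgeCount G : ℝ) + ε - (n : ℝ) ^ 2 / 4) ≤ (triangleCount G : ℝ) := by
  classical
  rw [edgeCount_eq_card_edgeFinset, triangleCount_eq_card_cliqueFinset]
  set m : ℝ := (#G.edgeFinset : ℝ)
  set t : ℝ := (#(G.cliqueFinset 3) : ℝ)
  have hdeg : ∑ v, (G.degree v : ℝ) ^ 2 ≤ n * (m - ε) + 6 * t := by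
    simpa using hfar.sum_degree_sq_le
  have hcs : (2 * m) ^ 2 ≤ n * ∑ v, (G.degree v : ℝ) ^ 2 := by
    have := sq_sum_le_card_mul_sum_sq (s := univ) (f := fun v => (G.degree v : ℝ))
    simpa [← Nat.cast_sum, sum_degrees_eq_twice_card_edges, m] using this
  rcases (Nat.cast_nonneg n : (0 : ℝ) ≤ n).eq_or_lt with hn | hn
  · simp [← hn, t]
  -- `n (6t - n (m + ε - n²/4)) ≥ 4m² - 2n²m + n⁴/4 = (2m - n²/2)²`
  have hmul : 0 ≤ (n : ℝ) * (6 * t - n * (m + ε - (n : ℝ) ^ 2 / 4)) := by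
    nlinarith [mul_le_mul_of_nonneg_left hdeg hn.le, sq_nonneg (2 * m - (n : ℝ) ^ 2 / 2)]
  linarith [nonneg_of_mul_nonneg_right hmul hn]

/-- If `G` is `ε`-far from being bipartite, then
`t(G) ≥ (n/6)·(m + ε − n²/4)`. -/
theorem stmt_11 (n : ℕ) (ε : ℝ) (hε : 0 < ε) (G : SimpleGraph (Fin n))
    (hfar : FarFromBipartite G ε) :
    (n : ℝ) / 6 * ((edgeCount G : ℝ) + ε - (n : ℝ) ^ 2 / 4) ≤ (triangleCount G : ℝ) :=
  stmt_11_general n ε G hfar
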